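/- arXiv:2409.03423 — 3 statements merged into one kernel-verified Lean document; each statement's English description precedes it below -/
import Mathlib

section
/- Let M, N, p, q be positive natural numbers with qN = pM, gcd(p,q)=1. Then the set Δ := { j + kM − rN : j ∈ {0,...,M/q−1}, k ∈ {0,...,p−1}, r ∈ {0,...,q−1} } is qN·ℤ-congruent to {0,1,...,pM−1}; that is, there is a partition of Δ into sets (Δ_n)_{n∈ℤ} such that (Δ_n + n·qN)_{n∈ℤ} partitions {0,...,pM−1}. -/
/-- `P` is a partition (into possibly empty pieces, indexed by `ℤ`) of `A`. -/
def IsZPartition (P : ℤ → Set ℤ) (A : Set ℤ) : Prop :=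
  (⋃ n, P n) = A ∧ Pairwise fun n m => Disjoint (P n) (P m)

/-- `A` is `Kℤ`-congruent to `B`: there is a partition `{A_n}` of `A` such that
`{A_n + nK}` is a partition of `B`. -/
def ZCongruent (K : ℤ) (A B : Set ℤ) : Prop :=
  ∃ P : ℤ → Set ℤ, IsZPartition P A ∧ IsZPartition (fun n => (· + n * K) '' P n) B

lemma aux_dvd_zero {D a : ℤ} (hD : 0 < D) (h : D ∣ a) (h1 : -D < a) (h2 : a < D) : a = 0 := by
  obtain ⟨c, rfl⟩ := h
  rcases lt_trichotomy c 0 with hc | hc | hc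
  · nlinarith
  · simp [hc]
  · nlinarith

lemma crt_exists (P Q : ℤ) (hP : 0 < P) (hQ : 0 < Q) (hco : IsCoprime P Q)
    (s : ℤ) (hs0 : 0 ≤ s) (hs1 : s < P * Q) :
    ∃ k r : ℤ, (0 ≤ k ∧ k < P) ∧ (0 ≤ r ∧ r < Q) ∧
      (k * Q - r * P = s ∨ k * Q - r * P = s - P * Q) := by
  obtain ⟨a, b, hab⟩ := id hco
  set k := (s * b) % P with hk
  set r := (-(s * a)) % Q with hr
  have hk0 : 0 ≤ k := Int.emod_nonneg _ (ne_of_gt hP)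
  have hk1 : k < P := Int.emod_lt_of_pos _ hP
  have hr0 : 0 ≤ r := Int.emod_nonneg _ (ne_of_gt hQ)
  have hr1 : r < Q := Int.emod_lt_of_pos _ hQ
  have hke : k = s * b - P * ((s * b) / P) := by rw [hk, Int.emod_def]
  have hre : r = -(s * a) - Q * ((-(s * a)) / Q) := by rw [hr, Int.emod_def]
  set t := k * Q - r * P with ht
  have hPd : P ∣ t - s :=
    ⟨-(s * a) - ((s * b) / P) * Q - r, by linear_combination Q * hke + s * hab⟩
  have hQd : Q ∣ t - s :=
    ⟨k - s * b + ((-(s * a)) / Q) * P, by linear_combination (-P) * hre + s * hab⟩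
  obtain ⟨c, hc⟩ := hco.mul_dvd hPd hQd
  have hPQ : 0 < P * Q := mul_pos hP hQ
  have htlb : -(P * Q) < t := by nlinarith
  have htub : t < P * Q := by nlinarith
  have hc1 : c < 1 := by nlinarith
  have hc2 : -2 < c := by nlinarith
  have : c = 0 ∨ c = -1 := by omega
  refine ⟨k, r, ⟨hk0, hk1⟩, ⟨hr0, hr1⟩, ?_⟩
  rcases this with rfl | rfl
  · left; linarith [hc]
  · right; linarith [hc]

lemma crt_unique (P Q : ℤ) (hP : 0 < P) (hQ : 0 < Q) (hco : IsCoprime P Q)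
    (k r k' r' : ℤ) (hk0 : 0 ≤ k) (hk1 : k < P) (hr0 : 0 ≤ r) (hr1 : r < Q)
    (hk0' : 0 ≤ k') (hk1' : k' < P) (hr0' : 0 ≤ r') (hr1' : r' < Q)
    (h : k * Q - r * P = k' * Q - r' * P + P * Q) : False := by
  have hdvd : P ∣ (k - k') * Q := ⟨r - r' + Q, by linear_combination h⟩
  have hPk := hco.dvd_of_dvd_mul_right hdvd
  have hkk : k - k' = 0 := aux_dvd_zero hP hPk (by linarith) (by linarith)
  have h2 : P * (r - r' + Q) = 0 := by linear_combination Q * hkk - h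
  have h3 : r - r' + Q = 0 := (mul_eq_zero.mp h2).resolve_left (ne_of_gt hP)
  linarith

lemma key_disj (P Q D : ℤ) (hP : 0 < P) (hQ : 0 < Q) (hD : 0 < D) (hco : IsCoprime P Q)
    (j k r j' k' r' : ℤ)
    (hj0 : 0 ≤ j) (hj1 : j < D) (hk0 : 0 ≤ k) (hk1 : k < P) (hr0 : 0 ≤ r) (hr1 : r < Q)
    (hj0' : 0 ≤ j') (hj1' : j' < D) (hk0' : 0 ≤ k') (hk1' : k' < P)
    (hr0' : 0 ≤ r') (hr1' : r' < Q)
    (h : j + D * (k * Q - r * P) = j' + D * (k' * Q - r' * P) + P * Q * D) : False := by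
  have hjj : j - j' = D * ((k' * Q - r' * P) + P * Q - (k * Q - r * P)) := by
    linear_combination h
  have hz : j - j' = 0 := aux_dvd_zero hD ⟨_, hjj⟩ (by linarith) (by linarith)
  have h2 : k * Q - r * P = k' * Q - r' * P + P * Q := by
    have hD0 : (D : ℤ) ≠ 0 := ne_of_gt hD
    have h3 : D * (k * Q - r * P) = D * (k' * Q - r' * P + P * Q) := by
      linear_combination h - hz
    exact mul_left_cancel₀ hD0 h3
  exact crt_unique P Q hP hQ hco k r k' r' hk0 hk1 hr0 hr1 hk0' hk1' hr0' hr1' h2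

/-- The set `Δ = {j + kM - rN : 0 ≤ j < M/q, 0 ≤ k < p, 0 ≤ r < q}` is
`qNℤ`-congruent to `{0, 1, ..., pM - 1}`. -/
theorem stmt3 (M N p q : ℕ) (hM : 0 < M) (hN : 0 < N) (hp : 0 < p) (hq : 0 < q)
    (hpq : Nat.Coprime p q) (hMN : q * N = p * M) :
    ZCongruent ((q : ℤ) * N)
      {m : ℤ | ∃ j k r : ℤ, (0 ≤ j ∧ j < ((M / q : ℕ) : ℤ)) ∧
        (0 ≤ k ∧ k < (p : ℤ)) ∧ (0 ≤ r ∧ r < (q : ℤ)) ∧ m = j + k * M - r * N}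
      {m : ℤ | 0 ≤ m ∧ m < ((p : ℤ) * M)} := by
  obtain ⟨d, hd⟩ : q ∣ M :=
    (hpq.symm).dvd_of_dvd_mul_left ⟨N, hMN.symm⟩
  have hd0 : 0 < d := by
    rcases Nat.eq_zero_or_pos d with rfl | h
    · rw [Nat.mul_zero] at hd; omega
    · exact h
  have hNd : N = p * d := by
    have h1 : q * N = q * (p * d) := by rw [hMN, hd]; ring
    exact Nat.eq_of_mul_eq_mul_left hq h1
  have hMq : ((M / q : ℕ) : ℤ) = (d : ℤ) := by
    rw [hd, Nat.mul_div_cancel_left _ hq]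
  have hMZ : (M : ℤ) = (q : ℤ) * d := by exact_mod_cast hd
  have hNZ : (N : ℤ) = (p : ℤ) * d := by exact_mod_cast hNd
  have hKM : (q : ℤ) * N = (p : ℤ) * M := by exact_mod_cast hMN
  have hP0 : (0 : ℤ) < p := by exact_mod_cast hp
  have hQ0 : (0 : ℤ) < q := by exact_mod_cast hq
  have hD0 : (0 : ℤ) < d := by exact_mod_cast hd0
  have hNpos : (0 : ℤ) < N := by exact_mod_cast hN
  have hMpos : (0 : ℤ) ≤ M := by positivity
  have hco : IsCoprime (p : ℤ) (q : ℤ) := Nat.isCoprime_iff_coprime.mpr hpq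
  set A : Set ℤ := {m : ℤ | ∃ j k r : ℤ, (0 ≤ j ∧ j < ((M / q : ℕ) : ℤ)) ∧
      (0 ≤ k ∧ k < (p : ℤ)) ∧ (0 ≤ r ∧ r < (q : ℤ)) ∧ m = j + k * M - r * N} with hA
  -- key disjointness fact
  have main : ∀ z z' : ℤ, z ∈ A → z' ∈ A → z = z' + (q : ℤ) * N → False := by
    intro z z' hz hz' hzz
    rw [hA, Set.mem_setOf_eq] at hz hz'
    obtain ⟨j, k, r, ⟨hj0, hj1⟩, ⟨hk0, hk1⟩, ⟨hr0, hr1⟩, rfl⟩ := hz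
    obtain ⟨j', k', r', ⟨hj0', hj1'⟩, ⟨hk0', hk1'⟩, ⟨hr0', hr1'⟩, rfl⟩ := hz'
    rw [hMq] at hj1 hj1'
    apply key_disj (p : ℤ) (q : ℤ) (d : ℤ) hP0 hQ0 hD0 hco j k r j' k' r'
      hj0 hj1 hk0 hk1 hr0 hr1 hj0' hj1' hk0' hk1' hr0' hr1'
    rw [hMZ, hNZ] at hzz
    linear_combination hzz
  refine ⟨fun n => if n = 0 then {m | m ∈ A ∧ 0 ≤ m} else
      if n = 1 then {m | m ∈ A ∧ m < 0} else ∅, ⟨?_, ?_⟩, ⟨?_, ?_⟩⟩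
  · -- union = A
    ext x
    constructor
    · intro hx
      rw [Set.mem_iUnion] at hx
      obtain ⟨n, hn⟩ := hx
      split_ifs at hn with h1 h2
      · exact hn.1
      · exact hn.1
      · exact hn.elim
    · intro hx
      rw [Set.mem_iUnion]
      rcases le_or_gt 0 x with h | h
      · refine ⟨0, ?_⟩
        rw [if_pos rfl]
        exact ⟨hx, h⟩
      · refine ⟨1, ?_⟩
        rw [if_neg (by norm_num : ¬(1:ℤ) = 0), if_pos rfl]
        exact ⟨hx, h⟩
  · -- pairwise disjoint
    intro n m hnm
    apply Set.disjoint_left.mpr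
    intro x hx hx'
    simp only at hx hx'
    split_ifs at hx hx' <;>
      first
        | exact hx.elim
        | exact hx'.elim
        | exact absurd hx.2 (not_le.mpr hx'.2)
        | exact absurd hx'.2 (not_le.mpr hx.2)
        | omega
  · -- image union = B
    ext x
    rw [Set.mem_iUnion]
    constructor
    · rintro ⟨n, y, hy, rfl⟩
      simp only at hy ⊢
      split_ifs at hy with h1 h2
      · -- n = 0
        subst h1
        obtain ⟨hyA, hy0⟩ := hy
        rw [hA, Set.mem_setOf_eq] at hyA
        obtain ⟨j, k, r, ⟨hj0, hj1⟩, ⟨hk0, hk1⟩, ⟨hr0, hr1⟩, rfl⟩ := hyA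
        rw [hMq] at hj1
        have hrN : 0 ≤ r * (N : ℤ) := mul_nonneg hr0 hNpos.le
        have hdM : (d : ℤ) ≤ M := by nlinarith
        have hkMle : k * (M : ℤ) ≤ ((p : ℤ) - 1) * M :=
          mul_le_mul_of_nonneg_right (by linarith) hMpos
        constructor
        · simpa using hy0
        · simp only [zero_mul, add_zero]
          linarith
      · -- n = 1
        subst h2
        obtain ⟨hyA, hy0⟩ := hy
        rw [hA, Set.mem_setOf_eq] at hyA
        obtain ⟨j, k, r, ⟨hj0, hj1⟩, ⟨hk0, hk1⟩, ⟨hr0, hr1⟩, rfl⟩ := hyA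
        rw [hMq] at hj1
        have hkM : 0 ≤ k * (M : ℤ) := mul_nonneg hk0 hMpos
        have hrNle : r * (N : ℤ) ≤ ((q : ℤ) - 1) * N :=
          mul_le_mul_of_nonneg_right (by linarith) hNpos.le
        constructor
        · simp only [one_mul]
          linarith [hKM]
        · simp only [one_mul]
          linarith [hKM]
      · exact hy.elim
    · rintro ⟨hx0, hx1⟩
      have hxd := Int.mul_ediv_add_emod x (d : ℤ)
      set j := x % (d : ℤ) with hjdef
      set s := x / (d : ℤ) with hsdef
      have hj0 : 0 ≤ j := Int.emod_nonneg _ (ne_of_gt hD0)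
      have hj1 : j < (d : ℤ) := Int.emod_lt_of_pos _ hD0
      have hs0 : 0 ≤ s := Int.ediv_nonneg hx0 hD0.le
      have hs1 : s < (p : ℤ) * q := by
        rw [hsdef, Int.ediv_lt_iff_lt_mul hD0]
        calc x < (p : ℤ) * M := hx1
          _ = (p : ℤ) * q * d := by rw [hMZ]; ring
      obtain ⟨k, r, ⟨hk0, hk1⟩, ⟨hr0, hr1⟩, hcase⟩ :=
        crt_exists (p : ℤ) (q : ℤ) hP0 hQ0 hco s hs0 hs1
      rcases hcase with heq | heq
      · refine ⟨0, x, ?_, by ring⟩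
        simp only [if_true]
        refine ⟨?_, hx0⟩
        rw [hA, Set.mem_setOf_eq]
        refine ⟨j, k, r, ⟨hj0, by rw [hMq]; exact hj1⟩, ⟨hk0, hk1⟩, ⟨hr0, hr1⟩, ?_⟩
        rw [hMZ, hNZ]
        linear_combination -hxd - (d : ℤ) * heq
      · refine ⟨1, x - (q : ℤ) * N, ?_, by ring⟩
        simp only [if_true]
        refine ⟨?_, by linarith [hKM]⟩
        rw [hA, Set.mem_setOf_eq]
        refine ⟨j, k, r, ⟨hj0, by rw [hMq]; exact hj1⟩, ⟨hk0, hk1⟩, ⟨hr0, hr1⟩, ?_⟩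
        rw [hMZ, hNZ]
        linear_combination -hxd - (d : ℤ) * heq
  · -- image pairwise disjoint
    intro n m hnm
    apply Set.disjoint_left.mpr
    intro x hx hx'
    obtain ⟨y, hy, hyx⟩ := hx
    obtain ⟨y', hy', hyx'⟩ := hx'
    simp only at hyx hyx' hy hy'
    rcases eq_or_ne n 0 with rfl | hn0
    · rw [if_pos rfl] at hy
      rcases eq_or_ne m 0 with rfl | hm0
      · exact hnm rfl
      rcases eq_or_ne m 1 with rfl | hm1
      · rw [if_neg hm0, if_pos rfl] at hy'
        exact main y y' hy.1 hy'.1 (by linarith [hyx, hyx'])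
      · rw [if_neg hm0, if_neg hm1] at hy'
        exact hy'.elim
    rcases eq_or_ne n 1 with rfl | hn1
    · rw [if_neg hn0, if_pos rfl] at hy
      rcases eq_or_ne m 0 with rfl | hm0
      · rw [if_pos rfl] at hy'
        exact main y' y hy'.1 hy.1 (by linarith [hyx, hyx'])
      rcases eq_or_ne m 1 with rfl | hm1
      · exact hnm rfl
      · rw [if_neg hm0, if_neg hm1] at hy'
        exact hy'.elim
    · rw [if_neg hn0, if_neg hn1] at hy
      exact hy.elim
end

section
/- Let g = {g_l}_{l∈ℕ_L} ⊂ ℓ²(ℤ) and let Z_g(j,θ) be the qL×p block matrix stacking the matrices Z_{g_l}(j,θ) with entries z_{pM}g_l(j+kM−rN, θ). Then for all j ∈ ℤ, a.e. θ ∈ ℝ, and all k' ∈ {0,...,p−1}, r' ∈ {0,...,q−1}: rank(Z_g(j,θ)) = rank(Z_g(j + k'M + r'N, θ)). -/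
open MeasureTheory Matrix

/-- The discrete Zak transform with period `P`. -/
noncomputable def discreteZak (P : ℕ) (f : ℤ → ℂ) (m : ℤ) (θ : ℝ) : ℂ :=
  ∑' k : ℤ, f (m + k * P) * Complex.exp (2 * Real.pi * Complex.I * k * θ)

/-- The `qL × p` block matrix `Z_g(j,θ)`, rows indexed by pairs `(l, r)`,
with entries `z_{pM} g_l (j + kM - rN, θ)`. -/
noncomputable def Zg (M N p q L : ℕ) (g : Fin L → ℤ → ℂ) (j : ℤ) (θ : ℝ) :
    Matrix (Fin L × Fin q) (Fin p) ℂ :=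
  Matrix.of fun lr k =>
    discreteZak (p * M) (g lr.1) (j + (k : ℕ) * (M : ℤ) - (lr.2 : ℕ) * (N : ℤ)) θ

/-- Quasi-periodicity of the discrete Zak transform. -/
lemma zak_period (P : ℕ) (f : ℤ → ℂ) (m : ℤ) (θ : ℝ) :
    discreteZak P f (m + (P : ℤ)) θ
      = Complex.exp (-(2 * Real.pi * Complex.I * θ)) * discreteZak P f m θ := by
  unfold discreteZak
  rw [← tsum_mul_left]
  calc ∑' k : ℤ, f (m + (P : ℤ) + k * P) * Complex.exp (2 * Real.pi * Complex.I * k * θ)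
      = ∑' k : ℤ, (fun k : ℤ => f (m + k * P) *
          Complex.exp (2 * Real.pi * Complex.I * ((k : ℂ) - 1) * θ))
          ((Equiv.addRight (1 : ℤ)) k) := by
        refine tsum_congr fun k => ?_
        simp only [Equiv.coe_addRight]
        congr 1
        · congr 1; ring
        · congr 1; push_cast; ring
    _ = ∑' k : ℤ, f (m + k * P) *
          Complex.exp (2 * Real.pi * Complex.I * ((k : ℂ) - 1) * θ) :=
        Equiv.tsum_eq (Equiv.addRight (1 : ℤ))
          (fun k : ℤ => f (m + k * P) *
            Complex.exp (2 * Real.pi * Complex.I * ((k : ℂ) - 1) * θ))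
    _ = ∑' k : ℤ, Complex.exp (-(2 * Real.pi * Complex.I * θ)) *
          (f (m + k * P) * Complex.exp (2 * Real.pi * Complex.I * k * θ)) := by
        refine tsum_congr fun k => ?_
        have h : Complex.exp (2 * Real.pi * Complex.I * ((k : ℂ) - 1) * θ)
            = Complex.exp (-(2 * Real.pi * Complex.I * θ)) *
              Complex.exp (2 * Real.pi * Complex.I * k * θ) := by
          rw [← Complex.exp_add]; congr 1; ring
        rw [h]; ring

/-- Column-operation matrix: permute columns by `σ` and scale column `b` by `c b`. -/
noncomputable def colop {n : Type*} [DecidableEq n] (σ : Equiv.Perm n) (c : n → ℂ) :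
    Matrix n n ℂ :=
  Matrix.of fun a b => if a = σ b then c b else 0

lemma mul_colop {m n : Type*} [Fintype n] [DecidableEq n]
    (B : Matrix m n ℂ) (σ : Equiv.Perm n) (c : n → ℂ) (i : m) (k : n) :
    (B * colop σ c) i k = c k * B i (σ k) := by
  rw [Matrix.mul_apply]
  rw [Finset.sum_eq_single (σ k)]
  · simp [colop, mul_comm]
  · intro b _ hb
    simp [colop, hb]
  · simp

lemma colop_mul {m n : Type*} [Fintype m] [DecidableEq m]
    (B : Matrix m n ℂ) (τ : Equiv.Perm m) (d : m → ℂ) (i : m) (k : n) :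
    ((colop τ d)ᵀ * B) i k = d i * B (τ i) k := by
  rw [Matrix.mul_apply]
  rw [Finset.sum_eq_single (τ i)]
  · simp [colop]
  · intro b _ hb
    simp [colop, Matrix.transpose_apply, hb]
  · simp

lemma colop_eq {n : Type*} [DecidableEq n] (σ : Equiv.Perm n) (c : n → ℂ) :
    colop σ c = (Matrix.diagonal c).submatrix σ.symm id := by
  ext a b
  simp only [colop, Matrix.of_apply, Matrix.submatrix_apply, Matrix.diagonal_apply, id]
  by_cases h : a = σ b
  · subst h; simp
  · rw [if_neg h, if_neg]
    intro hh
    exact h (by rw [← hh, Equiv.apply_symm_apply])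

lemma isUnit_colop_det {n : Type*} [Fintype n] [DecidableEq n]
    (σ : Equiv.Perm n) (c : n → ℂ) (hc : ∀ b, c b ≠ 0) :
    IsUnit (colop σ c).det := by
  rw [colop_eq, Matrix.det_permute, Matrix.det_diagonal, isUnit_iff_ne_zero]
  refine mul_ne_zero ?_ (Finset.prod_ne_zero_iff.2 fun b _ => hc b)
  rcases Int.units_eq_one_or (Equiv.Perm.sign σ.symm) with h | h <;> simp [h]

lemma rank_shift_M (M N p q L : ℕ) (hp : 0 < p) (g : Fin L → ℤ → ℂ) (j : ℤ) (θ : ℝ) :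
    (Zg M N p q L g (j + (M : ℤ)) θ).rank = (Zg M N p q L g j θ).rank := by
  obtain ⟨p, rfl⟩ : ∃ p', p = p' + 1 := ⟨p - 1, by omega⟩
  set σ : Equiv.Perm (Fin (p + 1)) := finRotate (p + 1) with hσdef
  set c : Fin (p + 1) → ℂ := fun k =>
    if k = Fin.last p then Complex.exp (-(2 * Real.pi * Complex.I * θ)) else 1 with hcdef
  have key : Zg M N (p + 1) q L g (j + (M : ℤ)) θ = Zg M N (p + 1) q L g j θ * colop σ c := by
    ext i k
    rw [mul_colop]
    show discreteZak ((p + 1) * M) (g i.1) (j + (M : ℤ) + (k : ℕ) * (M : ℤ) - (i.2 : ℕ) * N) θ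
      = c k * discreteZak ((p + 1) * M) (g i.1) (j + ((σ k : ℕ) : ℤ) * M - (i.2 : ℕ) * N) θ
    by_cases hk : k = Fin.last p
    · have hσk : ((σ k : Fin (p + 1)) : ℕ) = 0 := by
        rw [hk]; simp [hσdef, finRotate_last]
      have harg : j + (M : ℤ) + (k : ℕ) * (M : ℤ) - (i.2 : ℕ) * N
          = (j + ((σ k : ℕ) : ℤ) * M - (i.2 : ℕ) * N) + (((p + 1) * M : ℕ) : ℤ) := by
        rw [hσk, hk]
        push_cast [Fin.val_last]
        ring
      rw [harg, zak_period, hcdef]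
      simp [hk]
    · have hσk : ((σ k : Fin (p + 1)) : ℕ) = (k : ℕ) + 1 := coe_finRotate_of_ne_last hk
      have harg : j + (M : ℤ) + (k : ℕ) * (M : ℤ) - (i.2 : ℕ) * N
          = j + ((σ k : ℕ) : ℤ) * M - (i.2 : ℕ) * N := by
        rw [hσk]; push_cast; ring
      rw [harg, hcdef]
      simp [hk]
  rw [key]
  refine Matrix.rank_mul_eq_left_of_isUnit_det _ _ (isUnit_colop_det _ _ fun b => ?_)
  by_cases hb : b = Fin.last p <;> simp [hcdef, hb, Complex.exp_ne_zero]

lemma rank_shift_N (M N p q L : ℕ) (hq : 0 < q) (hMN : q * N = p * M)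
    (g : Fin L → ℤ → ℂ) (j : ℤ) (θ : ℝ) :
    (Zg M N p q L g (j + (N : ℤ)) θ).rank = (Zg M N p q L g j θ).rank := by
  obtain ⟨q, rfl⟩ : ∃ q', q = q' + 1 := ⟨q - 1, by omega⟩
  set ρ : Equiv.Perm (Fin (q + 1)) := (finRotate (q + 1)).symm with hρdef
  set τ : Equiv.Perm (Fin L × Fin (q + 1)) := Equiv.prodCongr (Equiv.refl _) ρ with hτdef
  set d : Fin L × Fin (q + 1) → ℂ := fun i =>
    if i.2 = 0 then Complex.exp (-(2 * Real.pi * Complex.I * θ)) else 1 with hddef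
  have hMN' : ((q : ℤ) + 1) * N = (p : ℤ) * M := by exact_mod_cast hMN
  have key : Zg M N p (q + 1) L g (j + (N : ℤ)) θ = (colop τ d)ᵀ * Zg M N p (q + 1) L g j θ := by
    ext i k
    rw [colop_mul]
    show discreteZak (p * M) (g i.1) (j + (N : ℤ) + (k : ℕ) * (M : ℤ) - (i.2 : ℕ) * N) θ
      = d i * discreteZak (p * M) (g ((τ i).1)) (j + (k : ℕ) * (M : ℤ) - (((τ i).2 : ℕ) : ℤ) * N) θ
    have hτ1 : (τ i).1 = i.1 := rfl
    have hτ2 : (τ i).2 = ρ i.2 := rfl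
    by_cases hr : i.2 = 0
    · have hρr : ((ρ i.2 : Fin (q + 1)) : ℕ) = q := by
        have : ρ (0 : Fin (q + 1)) = Fin.last q := by
          rw [hρdef, Equiv.symm_apply_eq, finRotate_last]
        rw [hr, this, Fin.val_last]
      have harg : j + (N : ℤ) + (k : ℕ) * (M : ℤ) - (i.2 : ℕ) * N
          = (j + (k : ℕ) * (M : ℤ) - (((τ i).2 : ℕ) : ℤ) * N) + ((p * M : ℕ) : ℤ) := by
        rw [hτ2, hρr, hr]
        simp only [Fin.val_zero]
        push_cast
        linarith [hMN']
      rw [harg, zak_period, hτ1, hddef]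
      simp [hr]
    · have hne : ρ i.2 ≠ Fin.last q := by
        intro h
        apply hr
        have := congrArg (finRotate (q + 1)) h
        rw [hρdef] at this
        rw [Equiv.apply_symm_apply, finRotate_last] at this
        exact this
      have hρr : ((ρ i.2 : Fin (q + 1)) : ℕ) + 1 = (i.2 : ℕ) := by
        have h1 : ((finRotate (q + 1)) (ρ i.2) : ℕ) = ((ρ i.2 : Fin (q + 1)) : ℕ) + 1 :=
          coe_finRotate_of_ne_last hne
        have h2 : (finRotate (q + 1)) (ρ i.2) = i.2 := by
          rw [hρdef, Equiv.apply_symm_apply]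
        rw [h2] at h1
        omega
      have harg : j + (N : ℤ) + (k : ℕ) * (M : ℤ) - (i.2 : ℕ) * N
          = j + (k : ℕ) * (M : ℤ) - (((τ i).2 : ℕ) : ℤ) * N := by
        rw [hτ2]
        have : ((i.2 : ℕ) : ℤ) = ((ρ i.2 : Fin (q + 1)) : ℕ) + 1 := by exact_mod_cast hρr.symm
        rw [this]
        push_cast
        ring
      rw [harg, hτ1, hddef]
      simp [hr]
  rw [key]
  refine Matrix.rank_mul_eq_right_of_isUnit_det _ _ ?_
  rw [Matrix.det_transpose]
  refine isUnit_colop_det _ _ fun b => ?_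
  by_cases hb : b.2 = 0 <;> simp [hddef, hb, Complex.exp_ne_zero]

/-- For all `j ∈ ℤ`, a.e. `θ`, and all `k' ∈ {0,...,p-1}`, `r' ∈ {0,...,q-1}`:
`rank Z_g(j,θ) = rank Z_g(j + k'M + r'N, θ)`. -/
theorem stmt8 (M N p q L : ℕ) (hM : 0 < M) (hN : 0 < N) (hp : 0 < p) (hq : 0 < q)
    (hL : 0 < L) (hpq : Nat.Coprime p q) (hMN : q * N = p * M)
    (g : Fin L → lp (fun _ : ℤ => ℂ) 2) :
    ∀ j : ℤ, ∀ᵐ θ : ℝ ∂volume, ∀ (k' : Fin p) (r' : Fin q),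
      (Zg M N p q L (fun l i => g l i) j θ).rank =
        (Zg M N p q L (fun l i => g l i)
          (j + (k' : ℕ) * (M : ℤ) + (r' : ℕ) * (N : ℤ)) θ).rank := by
  intro j
  refine Filter.Eventually.of_forall fun θ => ?_
  intro k' r'
  set G : ℤ → Matrix (Fin L × Fin q) (Fin p) ℂ :=
    fun j => Zg M N p q L (fun l i => g l i) j θ with hGdef
  have hMn : ∀ (n : ℕ) (j : ℤ), (G (j + (n : ℤ) * M)).rank = (G j).rank := by
    intro n
    induction n with
    | zero => intro j; norm_num
    | succ n ih =>
      intro j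
      have h : j + ((n + 1 : ℕ) : ℤ) * M = (j + (M : ℤ)) + (n : ℤ) * M := by push_cast; ring
      rw [h, ih, rank_shift_M M N p q L hp _ j θ]
  have hNn : ∀ (n : ℕ) (j : ℤ), (G (j + (n : ℤ) * N)).rank = (G j).rank := by
    intro n
    induction n with
    | zero => intro j; norm_num
    | succ n ih =>
      intro j
      have h : j + ((n + 1 : ℕ) : ℤ) * N = (j + (N : ℤ)) + (n : ℤ) * N := by push_cast; ring
      rw [h, ih, rank_shift_N M N p q L hq hMN _ j θ]
  show (G j).rank = (G (j + ((k' : ℕ) : ℤ) * M + ((r' : ℕ) : ℤ) * N)).rank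
  rw [hNn (r' : ℕ) (j + ((k' : ℕ) : ℤ) * M), hMn (k' : ℕ) j]
end

section
/- Let 𝕊 ⊂ ℤ be Nℤ-periodic and 𝕊_N = 𝕊 ∩ {0,...,N−1}. With qN = pM, gcd(p,q)=1, and 𝒦_j = {k ∈ {0,...,p−1} : j+kM ∈ 𝕊}, one has for all j ∈ ℤ: card(𝒦_j) = Σ_{n∈ℤ} χ_{𝕊_N}(j + (M/q)·n). In particular, j ↦ card(𝒦_j) is (M/q)-periodic. -/
/-!
Write `M = qL` and `N = pL`. Then `j + kM = j + L(kq)`, and `n ↦ (j + Ln ∈ 𝕊)` is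
`p`-periodic, so it is a predicate on `ZMod p`. As `k` runs over `{0, …, p-1}`, `kq` runs over
every residue mod `p` once, `q` being a unit there; the `n` with `0 ≤ j + Ln < N` form a window
of `p` consecutive integers, which also meets every residue once. Both sides therefore count the
residues `r` with `j + Lr ∈ 𝕊`, and replacing `j` by `j + L` only shifts the window.
-/

open scoped Classical

open Function

-- For infinite `{a // P a}` both sides are `0`: the sum is not summable and `Nat.card` is junk.
theorem tsum_ite_eq_natCard {α : Type*} (P : α → Prop) [DecidablePred P] :
    ∑' a, (if P a then (1 : ℝ) else 0) = Nat.card {a // P a} := by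
  have : (fun a => if P a then (1 : ℝ) else 0) = {a | P a}.indicator fun _ => 1 := by
    ext; simp [Set.indicator_apply]
  rw [this, ← tsum_subtype, tsum_const, nsmul_one]
  rfl

theorem Function.Periodic.eq_of_intCast_eq {P : ℤ → Prop} {p : ℕ} (hP : Periodic P p)
    {m n : ℤ} (h : (m : ZMod p) = n) : P m = P n := by
  obtain ⟨c, hc⟩ := (ZMod.intCast_eq_intCast_iff_dvd_sub m n p).mp h
  rw [show n = m + c • (p : ℤ) by rw [smul_eq_mul]; linarith, hP.zsmul c m]

theorem Function.Periodic.natCard_subtype_comp_eq {P : ℤ → Prop} {p : ℕ} [NeZero p]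
    (hP : Periodic P p) {α : Type*} {f : α → ℤ} (hf : Bijective fun a => (f a : ZMod p)) :
    Nat.card {a // P (f a)} = Nat.card {r : ZMod p // P r.val} :=
  Nat.card_congr <| (Equiv.ofBijective _ hf).subtypeEquiv fun a =>
    (hP.eq_of_intCast_eq (by simp)).to_iff

theorem ZMod.bijective_intCast_mul_fin {p q : ℕ} [NeZero p] (hq : q.Coprime p) :
    Bijective fun k : Fin p => (((k : ℤ) * q : ℤ) : ZMod p) := by
  refine (Fintype.bijective_iff_injective_and_card _).mpr ⟨fun k l hkl => ?_, by simp⟩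
  have hu : IsUnit (q : ZMod p) := (ZMod.unitOfCoprime q hq).isUnit
  push_cast at hkl
  have hkl' := hu.mul_left_injective hkl
  rw [ZMod.natCast_eq_natCast_iff', Nat.mod_eq_of_lt k.2, Nat.mod_eq_of_lt l.2] at hkl'
  exact Fin.ext hkl'

theorem ZMod.bijective_intCast_Ico (p : ℕ) [NeZero p] (a : ℤ) :
    Bijective fun n : Set.Ico a (a + p) => ((n : ℤ) : ZMod p) := by
  constructor
  · rintro ⟨m, hm₁, hm₂⟩ ⟨n, hn₁, hn₂⟩ h
    have hdvd := (ZMod.intCast_eq_intCast_iff_dvd_sub m n p).mp h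
    have hsub := Int.eq_zero_of_abs_lt_dvd hdvd (abs_lt.mpr ⟨by linarith, by linarith⟩)
    ext; simp only; linarith
  · intro r
    have hp : (0 : ℤ) < p := by exact_mod_cast NeZero.pos p
    refine ⟨⟨a + ((r.val : ℤ) - a) % p, ?_, ?_⟩, by simp⟩
    · linarith [Int.emod_nonneg ((r.val : ℤ) - a) hp.ne']
    · linarith [Int.emod_lt_of_pos ((r.val : ℤ) - a) hp]

theorem Int.add_mul_mem_Ico_zero_mul_iff {L : ℤ} (hL : 0 < L) (j n p : ℤ) :
    j + L * n ∈ Set.Ico 0 (p * L) ↔ n ∈ Set.Ico (-(j / L)) (-(j / L) + p) := by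
  have hlow : -(j / L) ≤ n ↔ 0 ≤ j + L * n := by
    rw [neg_le, Int.le_ediv_iff_mul_le hL]; constructor <;> intro h <;> linarith
  have hupp : n < -(j / L) + p ↔ j + L * n < p * L := by
    rw [show n < -(j / L) + p ↔ j / L < p - n by constructor <;> intro h <;> linarith,
      Int.ediv_lt_iff_lt_mul hL]
    constructor <;> intro h <;> linarith
  rw [Set.mem_Ico, Set.mem_Ico, hlow, hupp]

theorem Function.Periodic.of_forall_add_mul_mem {S : Set ℤ} {N : ℤ}
    (h : ∀ j ∈ S, ∀ n : ℤ, j + n * N ∈ S) : Periodic (· ∈ S) N := fun j =>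
  propext ⟨fun hj => by simpa using h _ hj (-1), fun hj => by simpa using h j hj 1⟩

theorem natCard_fin_add_mul_mem_eq_natCard_Ico {S : Set ℤ} {p q L : ℕ} [NeZero p] (hL : 0 < L)
    (hq : q.Coprime p) (hS : Periodic (· ∈ S) ((p : ℤ) * L)) (j : ℤ) :
    Nat.card {k : Fin p // j + (k : ℕ) * ((q * L : ℕ) : ℤ) ∈ S} =
      Nat.card {n : ℤ // j + L * n ∈ S ∩ Set.Ico 0 ((p * L : ℕ) : ℤ)} := by
  set P : ℤ → Prop := fun n => j + L * n ∈ S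
  have hP : Periodic P p := fun n => by
    simpa only [P, mul_add, ← add_assoc, mul_comm (L : ℤ) p] using hS (j + L * n)
  calc Nat.card {k : Fin p // j + (k : ℕ) * ((q * L : ℕ) : ℤ) ∈ S}
      = Nat.card {k : Fin p // P (k * q)} := by
        congr! 3 with k; simp only [P]; push_cast; ring_nf
    _ = Nat.card {r : ZMod p // P r.val} :=
        hP.natCard_subtype_comp_eq (ZMod.bijective_intCast_mul_fin hq)
    _ = Nat.card {n : Set.Ico (-(j / L)) (-(j / L) + p) // P n} :=
        (hP.natCard_subtype_comp_eq (ZMod.bijective_intCast_Ico p _)).symm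
    _ = Nat.card {n : ℤ // j + L * n ∈ S ∩ Set.Ico 0 ((p * L : ℕ) : ℤ)} := by
        refine Nat.card_congr <| (Equiv.subtypeSubtypeEquivSubtypeInter _ P).trans <|
          Equiv.subtypeEquivRight fun n => ?_
        rw [Set.mem_inter_iff, Nat.cast_mul,
          Int.add_mul_mem_Ico_zero_mul_iff (by exact_mod_cast hL), and_comm]

theorem natCard_add_mul_mem_add_eq (T : Set ℤ) (j L : ℤ) :
    Nat.card {n : ℤ // j + L + L * n ∈ T} = Nat.card {n : ℤ // j + L * n ∈ T} :=
  Nat.card_congr <| (Equiv.addRight 1).subtypeEquiv fun n => by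
    rw [Equiv.coe_addRight, mul_add_one, ← add_assoc, add_right_comm]

theorem stmt10_general (M N p q : ℕ) (hM : 0 < M) (hp : 0 < p) (hq : 0 < q)
    (hpq : Nat.Coprime p q) (hMN : q * N = p * M)
    (S : Set ℤ) (hper : ∀ j ∈ S, ∀ n : ℤ, j + n * N ∈ S) :
    (∀ j : ℤ,
      ((Nat.card {k : Fin p // j + (k : ℕ) * (M : ℤ) ∈ S}) : ℝ) =
        ∑' n : ℤ, (if j + ((M / q : ℕ) : ℤ) * n ∈ S ∩ Set.Ico (0 : ℤ) (N : ℤ)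
          then (1 : ℝ) else 0)) ∧
    (∀ j : ℤ,
      Nat.card {k : Fin p // j + ((M / q : ℕ) : ℤ) + (k : ℕ) * (M : ℤ) ∈ S} =
        Nat.card {k : Fin p // j + (k : ℕ) * (M : ℤ) ∈ S}) := by
  obtain ⟨L, rfl⟩ : q ∣ M := hpq.symm.dvd_of_dvd_mul_left ⟨N, hMN.symm⟩
  obtain rfl : N = p * L := Nat.eq_of_mul_eq_mul_left hq (by rw [hMN]; ring)
  have hL : 0 < L := Nat.pos_of_mul_pos_left hM
  have : NeZero p := ⟨hp.ne'⟩
  have key := natCard_fin_add_mul_mem_eq_natCard_Ico hL hpq.symm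
    (Periodic.of_forall_add_mul_mem (by exact_mod_cast hper))
  rw [Nat.mul_div_cancel_left L hq]
  exact ⟨fun j => by rw [key, tsum_ite_eq_natCard],
    fun j => by rw [key, key, natCard_add_mul_mem_add_eq]⟩

/-- For an `Nℤ`-periodic set `𝕊` with `qN = pM`, `gcd(p,q) = 1`:
`card 𝒦_j = Σ_{n∈ℤ} χ_{𝕊_N}(j + (M/q)·n)` for every `j`, and in particular
`j ↦ card 𝒦_j` is `(M/q)`-periodic. -/
theorem stmt10 (M N p q : ℕ) (hM : 0 < M) (hN : 0 < N) (hp : 0 < p) (hq : 0 < q)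
    (hpq : Nat.Coprime p q) (hMN : q * N = p * M)
    (S : Set ℤ) (hper : ∀ j ∈ S, ∀ n : ℤ, j + n * N ∈ S) :
    (∀ j : ℤ,
      ((Nat.card {k : Fin p // j + (k : ℕ) * (M : ℤ) ∈ S}) : ℝ) =
        ∑' n : ℤ, (if j + ((M / q : ℕ) : ℤ) * n ∈ S ∩ Set.Ico (0 : ℤ) (N : ℤ)
          then (1 : ℝ) else 0)) ∧
    (∀ j : ℤ,
      Nat.card {k : Fin p // j + ((M / q : ℕ) : ℤ) + (k : ℕ) * (M : ℤ) ∈ S} =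
        Nat.card {k : Fin p // j + (k : ℕ) * (M : ℤ) ∈ S}) :=
  stmt10_general M N p q hM hp hq hpq hMN S hper
end
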